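/- Let f : G × G → ℝ be a smooth right invariant cost function and let the Riemannian metric on G be right invariant. Let u be an admissible input, let X solve the left invariant system Ẋ = Xu, and let X̂ solve the left gradient observer X̂̇ = X̂u − grad₁ f(X̂, X). Then the canonical right invariant error E_r(t) = X̂(t)X(t)⁻¹ satisfies the autonomous gradient equation Ė_r = −grad₁ f(E_r, e). Analogously, if f and the metric are left invariant, X solves the right invariant system Ẋ = vX for an admissible input v, and X̂ solves the right gradient observer X̂̇ = vX̂ − grad₁ f(X̂, X), then the canonical left invariant error E_l(t) = X(t)⁻¹X̂(t) satisfies Ė_l = −grad₁ f(E_l, e). -/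

import Mathlib

open scoped Manifold
open Filter Topology

/-- `TransL I a b` is the tangent map `T_b L_a` of left translation `L_a : g ↦ a * g`
at the point `b`, with all tangent spaces of the Lie group canonically identified
with the model space `E`. -/
noncomputable def TransL {E : Type*} [NormedAddCommGroup E] [NormedSpace ℝ E]
    {H : Type*} [TopologicalSpace H] (I : ModelWithCorners ℝ E H)
    {G : Type*} [TopologicalSpace G] [ChartedSpace H G] [Group G]
    (a b : G) : E →L[ℝ] E :=
  mfderiv I I (fun g => a * g) b

/-- `TransR I a b` is the tangent map `T_b R_a` of right translation `R_a : g ↦ g * a`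
at the point `b`. -/
noncomputable def TransR {E : Type*} [NormedAddCommGroup E] [NormedSpace ℝ E]
    {H : Type*} [TopologicalSpace H] (I : ModelWithCorners ℝ E H)
    {G : Type*} [TopologicalSpace G] [ChartedSpace H G] [Group G]
    (a b : G) : E →L[ℝ] E :=
  mfderiv I I (fun g => g * a) b

/-- `cVel I X t` is the velocity `Ẋ(t)` of the curve `X : ℝ → G`. -/
noncomputable def cVel {E : Type*} [NormedAddCommGroup E] [NormedSpace ℝ E]
    {H : Type*} [TopologicalSpace H] (I : ModelWithCorners ℝ E H)
    {G : Type*} [TopologicalSpace G] [ChartedSpace H G]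
    (X : ℝ → G) (t : ℝ) : E :=
  mfderiv 𝓘(ℝ) I X t (1 : ℝ)

/-- The curve `X` is a (smooth, globally defined) solution of the left invariant
system `Ẋ = Xu` with input `u : ℝ → 𝔤` (the Lie algebra `𝔤 = T_eG` being
identified with the model space `E`). -/
def SolLeftInvSys {E : Type*} [NormedAddCommGroup E] [NormedSpace ℝ E]
    {H : Type*} [TopologicalSpace H] (I : ModelWithCorners ℝ E H)
    {G : Type*} [TopologicalSpace G] [ChartedSpace H G] [Group G]
    (u : ℝ → E) (X : ℝ → G) : Prop :=
  ContMDiff 𝓘(ℝ) I (⊤ : ℕ∞) X ∧ ∀ t, cVel I X t = TransL I (X t) 1 (u t)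

/-- The curve `X` is a (smooth, globally defined) solution of the right invariant
system `Ẋ = vX` with input `v : ℝ → 𝔤`. -/
def SolRightInvSys {E : Type*} [NormedAddCommGroup E] [NormedSpace ℝ E]
    {H : Type*} [TopologicalSpace H] (I : ModelWithCorners ℝ E H)
    {G : Type*} [TopologicalSpace G] [ChartedSpace H G] [Group G]
    (v : ℝ → E) (X : ℝ → G) : Prop :=
  ContMDiff 𝓘(ℝ) I (⊤ : ℕ∞) X ∧ ∀ t, cVel I X t = TransR I (X t) 1 (v t)

/-- `dFst I f X Y η` is the differential `d₁f(X,Y)(η)` of the cost `f` with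
respect to its first argument, applied to the tangent vector `η ∈ T_X G`. -/
noncomputable def dFst {E : Type*} [NormedAddCommGroup E] [NormedSpace ℝ E]
    {H : Type*} [TopologicalSpace H] (I : ModelWithCorners ℝ E H)
    {G : Type*} [TopologicalSpace G] [ChartedSpace H G]
    (f : G → G → ℝ) (X Y : G) (η : E) : ℝ :=
  mfderiv I 𝓘(ℝ) (fun Z => f Z Y) X η

/-- `m` is (pointwise) a Riemannian metric on `G`: a symmetric positive definite
bilinear form on each tangent space (identified with the model space `E`). -/
def IsRiemMetric {E : Type*} [NormedAddCommGroup E] [NormedSpace ℝ E]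
    {G : Type*} (m : G → E →ₗ[ℝ] E →ₗ[ℝ] ℝ) : Prop :=
  (∀ (x : G) (v w : E), m x v w = m x w v) ∧ (∀ (x : G) (v : E), v ≠ 0 → 0 < m x v v)

/-- The Riemannian metric `m` is left invariant: every left translation is an
isometry. -/
def LeftInvMetric {E : Type*} [NormedAddCommGroup E] [NormedSpace ℝ E]
    {H : Type*} [TopologicalSpace H] (I : ModelWithCorners ℝ E H)
    {G : Type*} [TopologicalSpace G] [ChartedSpace H G] [Group G]
    (m : G → E →ₗ[ℝ] E →ₗ[ℝ] ℝ) : Prop :=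
  ∀ (S x : G) (v w : E), m (S * x) (TransL I S x v) (TransL I S x w) = m x v w

/-- The Riemannian metric `m` is right invariant: every right translation is an
isometry. -/
def RightInvMetric {E : Type*} [NormedAddCommGroup E] [NormedSpace ℝ E]
    {H : Type*} [TopologicalSpace H] (I : ModelWithCorners ℝ E H)
    {G : Type*} [TopologicalSpace G] [ChartedSpace H G] [Group G]
    (m : G → E →ₗ[ℝ] E →ₗ[ℝ] ℝ) : Prop :=
  ∀ (S x : G) (v w : E), m (x * S) (TransR I S x v) (TransR I S x w) = m x v w

/-- The cost `f : G × G → ℝ` is left invariant. -/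
def LeftInvCost {G : Type*} [Group G] (f : G → G → ℝ) : Prop :=
  ∀ S X Y : G, f (S * X) (S * Y) = f X Y

/-- The cost `f : G × G → ℝ` is right invariant. -/
def RightInvCost {G : Type*} [Group G] (f : G → G → ℝ) : Prop :=
  ∀ S X Y : G, f (X * S) (Y * S) = f X Y

/-- `gradf X Y = grad₁ f(X,Y) ∈ T_X G` is the Riemannian gradient of the cost `f`
with respect to its first argument, characterised by
`⟨grad₁ f(X,Y), η⟩ = d₁f(X,Y)(η)` for all `η ∈ T_X G`. -/
def IsGradFst {E : Type*} [NormedAddCommGroup E] [NormedSpace ℝ E]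
    {H : Type*} [TopologicalSpace H] (I : ModelWithCorners ℝ E H)
    {G : Type*} [TopologicalSpace G] [ChartedSpace H G]
    (m : G → E →ₗ[ℝ] E →ₗ[ℝ] ℝ) (f : G → G → ℝ) (gradf : G → G → E) : Prop :=
  ∀ (X Y : G) (η : E), m X (gradf X Y) η = dFst I f X Y η

/-- The curve `X̂` is a (smooth, globally defined) solution of the left gradient
observer `X̂̇ = X̂u − grad₁ f(X̂, X)` (with exact measurements `Y = X`, `w = u`). -/
def SolLeftGradObs {E : Type*} [NormedAddCommGroup E] [NormedSpace ℝ E]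
    {H : Type*} [TopologicalSpace H] (I : ModelWithCorners ℝ E H)
    {G : Type*} [TopologicalSpace G] [ChartedSpace H G] [Group G]
    (gradf : G → G → E) (u : ℝ → E) (X Xh : ℝ → G) : Prop :=
  ContMDiff 𝓘(ℝ) I (⊤ : ℕ∞) Xh ∧
    ∀ t, cVel I Xh t = TransL I (Xh t) 1 (u t) - gradf (Xh t) (X t)

/-- The curve `X̂` is a (smooth, globally defined) solution of the right gradient
observer `X̂̇ = vX̂ − grad₁ f(X̂, X)` (with exact measurements `Y = X`, `w = v`). -/
def SolRightGradObs {E : Type*} [NormedAddCommGroup E] [NormedSpace ℝ E]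
    {H : Type*} [TopologicalSpace H] (I : ModelWithCorners ℝ E H)
    {G : Type*} [TopologicalSpace G] [ChartedSpace H G] [Group G]
    (gradf : G → G → E) (v : ℝ → E) (X Xh : ℝ → G) : Prop :=
  ContMDiff 𝓘(ℝ) I (⊤ : ℕ∞) Xh ∧
    ∀ t, cVel I Xh t = TransR I (Xh t) 1 (v t) - gradf (Xh t) (X t)


section helpers
variable {E : Type*} [NormedAddCommGroup E] [NormedSpace ℝ E]
  {H : Type*} [TopologicalSpace H] {I : ModelWithCorners ℝ E H}
  {G : Type*} [TopologicalSpace G] [ChartedSpace H G] [Group G] [LieGroup I (⊤ : ℕ∞) G]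

set_option linter.unusedSectionVars false

lemma TransL_comp (a b c : G) (v : E) :
    TransL I a (b * c) (TransL I b c v) = TransL I (a * b) c v := by
  have h : (fun g : G => (a * b) * g) = (fun g : G => a * g) ∘ (fun g : G => b * g) :=
    funext fun g => mul_assoc a b g
  symm
  rw [TransL, TransL, TransL, h,
    mfderiv_comp c mdifferentiableAt_mul_left mdifferentiableAt_mul_left]
  rfl

lemma TransR_comp (a b c : G) (v : E) :
    TransR I a (c * b) (TransR I b c v) = TransR I (b * a) c v := by
  have h : (fun g : G => g * (b * a)) = (fun g : G => g * a) ∘ (fun g : G => g * b) :=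
    funext fun g => (mul_assoc g b a).symm
  symm
  rw [TransR, TransR, TransR, h,
    mfderiv_comp c mdifferentiableAt_mul_right mdifferentiableAt_mul_right]
  rfl

lemma TransL_one (x : G) (v : E) : TransL I 1 x v = v := by
  rw [TransL, show (fun g : G => (1 : G) * g) = id from funext fun g => one_mul g, mfderiv_id]
  rfl

lemma TransR_one (x : G) (v : E) : TransR I 1 x v = v := by
  rw [TransR, show (fun g : G => g * (1 : G)) = id from funext fun g => mul_one g, mfderiv_id]
  rfl

lemma TransR_inj (a b : G) {v w : E} (h : TransR I a b v = TransR I a b w) : v = w := by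
  have h1 := TransR_comp (I := I) a⁻¹ a b v
  have h2 := TransR_comp (I := I) a⁻¹ a b w
  rw [h] at h1
  rw [h1] at h2
  rw [mul_inv_cancel] at h2
  rwa [TransR_one, TransR_one] at h2

lemma TransL_inj (a b : G) {v w : E} (h : TransL I a b v = TransL I a b w) : v = w := by
  have h1 := TransL_comp (I := I) a⁻¹ a b v
  have h2 := TransL_comp (I := I) a⁻¹ a b w
  rw [h] at h1
  rw [h1] at h2
  rw [inv_mul_cancel] at h2
  rwa [TransL_one, TransL_one] at h2

lemma cVel_mul (a b : ℝ → G) (ha : ContMDiff 𝓘(ℝ) I (⊤ : ℕ∞) a) (hb : ContMDiff 𝓘(ℝ) I (⊤ : ℕ∞) b) (t : ℝ) :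
    cVel I (fun s => a s * b s) t
      = TransR I (b t) (a t) (cVel I a t) + TransL I (a t) (b t) (cVel I b t) := by
  have hda := (ha t).mdifferentiableAt (by simp)
  have hdb := (hb t).mdifferentiableAt (by simp)
  have hpair : MDifferentiableAt 𝓘(ℝ) (I.prod I) (fun s => (a s, b s)) t := hda.prodMk hdb
  have hmul : MDifferentiableAt (I.prod I) I (fun p : G × G => p.1 * p.2) (a t, b t) :=
    ((contMDiff_mul I ((⊤ : ℕ∞) : WithTop ℕ∞)) _).mdifferentiableAt (by simp)
  have hcomp : (fun s => a s * b s) = (fun p : G × G => p.1 * p.2) ∘ (fun s => (a s, b s)) := rfl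
  rw [cVel, hcomp, mfderiv_comp t hmul hpair]
  erw [ContinuousLinearMap.comp_apply]
  rw [hda.mfderiv_prod hdb, mfderiv_prod_eq_add_apply hmul]
  rfl

lemma eq_of_pairing {m : G → E →ₗ[ℝ] E →ₗ[ℝ] ℝ} (hm : IsRiemMetric m) (x : G) {g1 g2 : E}
    (h : ∀ w, m x g1 w = m x g2 w) : g1 = g2 := by
  by_contra hne
  have h0 : g1 - g2 ≠ 0 := sub_ne_zero.mpr hne
  have hpos := hm.2 x _ h0
  have hz : m x (g1 - g2) (g1 - g2) = 0 := by
    rw [map_sub, hm.1 x (g1 - g2) g1, hm.1 x (g1 - g2) g2, h (g1 - g2), sub_self]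
  rw [hz] at hpos
  exact lt_irrefl _ hpos

lemma partial_mdiff {f : G → G → ℝ}
    (hf : ContMDiff (I.prod I) 𝓘(ℝ) (⊤ : ℕ∞) (fun p : G × G => f p.1 p.2)) (X Y : G) :
    MDifferentiableAt I 𝓘(ℝ) (fun Z => f Z Y) X :=
  ((hf.comp (contMDiff_id.prodMk contMDiff_const)) X).mdifferentiableAt (by simp)

lemma gradf_right_inv {f : G → G → ℝ}
    (hf : ContMDiff (I.prod I) 𝓘(ℝ) (⊤ : ℕ∞) (fun p : G × G => f p.1 p.2))
    {m : G → E →ₗ[ℝ] E →ₗ[ℝ] ℝ} (hm : IsRiemMetric m)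
    {gradf : G → G → E} (hgrad : IsGradFst I m f gradf)
    (hfR : RightInvCost f) (hmR : RightInvMetric I m) (S X Y : G) :
    gradf (X * S) (Y * S) = TransR I S X (gradf X Y) := by
  apply eq_of_pairing hm (X * S)
  intro w
  obtain ⟨v, rfl⟩ : ∃ v, w = TransR I S X v := by
    refine ⟨TransR I S⁻¹ (X * S) w, ?_⟩
    have h := TransR_comp (I := I) S S⁻¹ (X * S) w
    rw [mul_inv_cancel_right] at h
    rw [h, inv_mul_cancel, TransR_one]
  rw [hgrad, hmR S X (gradf X Y) v, hgrad]
  have hcomp := mfderiv_comp (I' := I) (f := fun Z : G => Z * S)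
    (g := fun Z => f Z (Y * S)) X (partial_mdiff hf (X * S) (Y * S))
    (mdifferentiableAt_mul_right (a := S) (b := X))
  have hfun : ((fun Z => f Z (Y * S)) ∘ (fun Z : G => Z * S)) = fun Z => f Z Y :=
    funext fun Z => hfR S Z Y
  rw [dFst, dFst, TransR, ← hfun, hcomp]
  rfl

lemma gradf_left_inv {f : G → G → ℝ}
    (hf : ContMDiff (I.prod I) 𝓘(ℝ) (⊤ : ℕ∞) (fun p : G × G => f p.1 p.2))
    {m : G → E →ₗ[ℝ] E →ₗ[ℝ] ℝ} (hm : IsRiemMetric m)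
    {gradf : G → G → E} (hgrad : IsGradFst I m f gradf)
    (hfL : LeftInvCost f) (hmL : LeftInvMetric I m) (S X Y : G) :
    gradf (S * X) (S * Y) = TransL I S X (gradf X Y) := by
  apply eq_of_pairing hm (S * X)
  intro w
  obtain ⟨v, rfl⟩ : ∃ v, w = TransL I S X v := by
    refine ⟨TransL I S⁻¹ (S * X) w, ?_⟩
    have h := TransL_comp (I := I) S S⁻¹ (S * X) w
    rw [inv_mul_cancel_left] at h
    rw [h, mul_inv_cancel, TransL_one]
  rw [hgrad, hmL S X (gradf X Y) v, hgrad]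
  have hcomp := mfderiv_comp (I' := I) (f := fun Z : G => S * Z)
    (g := fun Z => f Z (S * Y)) X (partial_mdiff hf (S * X) (S * Y))
    (mdifferentiableAt_mul_left (a := S) (b := X))
  have hfun : ((fun Z => f Z (S * Y)) ∘ (fun Z : G => S * Z)) = fun Z => f Z Y :=
    funext fun Z => hfL S Z Y
  rw [dFst, dFst, TransL, ← hfun, hcomp]
  rfl

end helpers
/- STATEMENT 7: for a right invariant cost `f` and right invariant Riemannian
metric, along any solution `X` of the left invariant system `Ẋ = Xu` and any
solution `X̂` of the left gradient observer `X̂̇ = X̂u − grad₁ f(X̂, X)`, the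
canonical right invariant error `E_r(t) = X̂(t)X(t)⁻¹` satisfies the autonomous
gradient equation `Ė_r = −grad₁ f(E_r, e)`.  Analogously, for a left invariant
cost and metric, the right invariant system `Ẋ = vX` and the right gradient
observer `X̂̇ = vX̂ − grad₁ f(X̂, X)`, the canonical left invariant error
`E_l(t) = X(t)⁻¹X̂(t)` satisfies `Ė_l = −grad₁ f(E_l, e)`. -/
theorem gradient_observer_error_dynamics
    {E : Type*} [NormedAddCommGroup E] [NormedSpace ℝ E] [FiniteDimensional ℝ E]
    {H : Type*} [TopologicalSpace H] {I : ModelWithCorners ℝ E H}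
    {G : Type*} [TopologicalSpace G] [ChartedSpace H G] [Group G] [LieGroup I (⊤ : ℕ∞) G]
    [ConnectedSpace G]
    (f : G → G → ℝ) (hf : ContMDiff (I.prod I) 𝓘(ℝ) (⊤ : ℕ∞) (fun p : G × G => f p.1 p.2))
    (m : G → E →ₗ[ℝ] E →ₗ[ℝ] ℝ) (hm : IsRiemMetric m)
    (gradf : G → G → E) (hgrad : IsGradFst I m f gradf) :
    ((RightInvCost f → RightInvMetric I m →
      ∀ u : ℝ → E, ContDiff ℝ (⊤ : ℕ∞) u → ∀ X Xh : ℝ → G,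
        SolLeftInvSys I u X → SolLeftGradObs I gradf u X Xh →
        ∀ t, cVel I (fun s => Xh s * (X s)⁻¹) t = - gradf (Xh t * (X t)⁻¹) 1))
    ∧
    ((LeftInvCost f → LeftInvMetric I m →
      ∀ v : ℝ → E, ContDiff ℝ (⊤ : ℕ∞) v → ∀ X Xh : ℝ → G,
        SolRightInvSys I v X → SolRightGradObs I gradf v X Xh →
        ∀ t, cVel I (fun s => (X s)⁻¹ * Xh s) t = - gradf ((X t)⁻¹ * Xh t) 1)) := by
  constructor
  · intro hfR hmR u hu X Xh hX hXh t
    set Er : ℝ → G := fun s => Xh s * (X s)⁻¹ with hErdef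
    have hErX : Er t * X t = Xh t := inv_mul_cancel_right _ _
    have hEsm : ContMDiff 𝓘(ℝ) I (⊤ : ℕ∞) Er := hXh.1.mul hX.1.inv
    have hmr := cVel_mul Er X hEsm hX.1 t
    have hXeq : (fun s => Er s * X s) = Xh := funext fun s => inv_mul_cancel_right _ _
    rw [hXeq, hXh.2 t, hX.2 t] at hmr
    have hcancel : TransL I (Er t) (X t) (TransL I (X t) 1 (u t))
        = TransL I (Xh t) 1 (u t) := by
      have h := TransL_comp (I := I) (Er t) (X t) 1 (u t)
      rw [mul_one] at h
      rw [h, hErX]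
    rw [hcancel] at hmr
    have key : TransR I (X t) (Er t) (cVel I Er t) = - gradf (Xh t) (X t) := by
      have : TransR I (X t) (Er t) (cVel I Er t)
          = TransL I (Xh t) 1 (u t) - gradf (Xh t) (X t) - TransL I (Xh t) 1 (u t) := by
        rw [hmr]; abel
      rw [this]; abel
    have hginv := gradf_right_inv hf hm hgrad hfR hmR (X t) (Er t) 1
    rw [one_mul, hErX] at hginv
    apply TransR_inj (I := I) (X t) (Er t)
    rw [key, map_neg, ← hginv]
  · intro hfL hmL v hv X Xh hX hXh t
    set El : ℝ → G := fun s => (X s)⁻¹ * Xh s with hEldef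
    have hXEl : X t * El t = Xh t := mul_inv_cancel_left _ _
    have hEsm : ContMDiff 𝓘(ℝ) I (⊤ : ℕ∞) El := hX.1.inv.mul hXh.1
    have hmr := cVel_mul X El hX.1 hEsm t
    have hXeq : (fun s => X s * El s) = Xh := funext fun s => mul_inv_cancel_left _ _
    rw [hXeq, hXh.2 t, hX.2 t] at hmr
    have hcancel : TransR I (El t) (X t) (TransR I (X t) 1 (v t))
        = TransR I (Xh t) 1 (v t) := by
      have h := TransR_comp (I := I) (El t) (X t) 1 (v t)
      rw [one_mul] at h
      rw [h, hXEl]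
    rw [hcancel] at hmr
    have key : TransL I (X t) (El t) (cVel I El t) = - gradf (Xh t) (X t) := by
      have : TransL I (X t) (El t) (cVel I El t)
          = TransR I (Xh t) 1 (v t) - gradf (Xh t) (X t) - TransR I (Xh t) 1 (v t) := by
        rw [hmr]; abel
      rw [this]; abel
    have hginv := gradf_left_inv hf hm hgrad hfL hmL (X t) (El t) 1
    rw [mul_one, hXEl] at hginv
    apply TransL_inj (I := I) (X t) (El t)
    rw [key, map_neg, ← hginv]
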